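/- The Gaussian profile T(ξ,ζ,t) = T_b + (1 + 4κξ₀²t)^{-1/2} exp(−(ξ₀ξ)²/(1 + 4κξ₀²t)) · (1 + cos(πζ))/2 for |ζ| < 1 (and T = T_b for |ζ| ≥ 1), with constants T_b, ξ₀, κ > 0, satisfies ∂T/∂t = κ ∂²T/∂ξ² pointwise for every (ξ, ζ, t) with t ≥ 0, i.e., it solves the anisotropic heat equation with parallel conductivity κ along the ξ-direction and zero perpendicular conductivity, since the ζ-dependent factor is time-independent and constant along the ξ-direction. -/

import Mathlib

/-!
The ζ-factor does not depend on `ξ` or `t`, so it is enough that the spreading Gaussian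
`G(ξ,t) = u^{-1/2} exp(-(cξ)²/u)`, `u = 1 + 4κc²t`, solves the one-dimensional heat equation.
Both sides equal `κ ((2c²ξ/u)² - 2c²/u) G`: in `ξ` the Gaussian has logarithmic derivative
`-2c²ξ/u`, and in `t` the amplitude and the width contribute `-2κc²/u` and `4κc⁴ξ²/u²` to the
logarithmic derivative.
-/

open Real

noncomputable def spreadingGaussian (κ c s x : ℝ) : ℝ :=
  (1 + 4 * κ * c ^ 2 * s) ^ (-(1:ℝ)/2) * exp (-(c * x) ^ 2 / (1 + 4 * κ * c ^ 2 * s))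

namespace spreadingGaussian

variable (κ c : ℝ)

theorem hasDerivAt_space (s x : ℝ) :
    HasDerivAt (fun y => spreadingGaussian κ c s y)
      (-(2 * c ^ 2 * x / (1 + 4 * κ * c ^ 2 * s)) * spreadingGaussian κ c s x) x := by
  set u := 1 + 4 * κ * c ^ 2 * s
  have hexponent : HasDerivAt (fun y => -(c * y) ^ 2 / u) (-(2 * c ^ 2 * x / u)) x := by
    refine ((((hasDerivAt_id' x).const_mul c).pow 2).fun_neg.div_const u).congr_deriv ?_
    push_cast
    ring
  refine (hexponent.exp.const_mul (u ^ (-(1:ℝ)/2))).congr_deriv ?_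
  unfold spreadingGaussian
  ring

theorem deriv_space (s : ℝ) :
    deriv (fun y => spreadingGaussian κ c s y) =
      fun x => -(2 * c ^ 2 * x / (1 + 4 * κ * c ^ 2 * s)) * spreadingGaussian κ c s x :=
  funext fun x => (hasDerivAt_space κ c s x).deriv

theorem hasDerivAt_deriv_space (s x : ℝ) :
    HasDerivAt (deriv fun y => spreadingGaussian κ c s y)
      (((2 * c ^ 2 * x / (1 + 4 * κ * c ^ 2 * s)) ^ 2 - 2 * c ^ 2 / (1 + 4 * κ * c ^ 2 * s)) *
        spreadingGaussian κ c s x) x := by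
  set u := 1 + 4 * κ * c ^ 2 * s
  have hrate : HasDerivAt (fun y => -(2 * c ^ 2 * y / u)) (-(2 * c ^ 2 / u)) x := by
    simpa only [mul_one] using (((hasDerivAt_id' x).const_mul (2 * c ^ 2)).div_const u).fun_neg
  rw [deriv_space]
  refine (hrate.mul (hasDerivAt_space κ c s x)).congr_deriv ?_
  ring

theorem hasDerivAt_time (s x : ℝ) (hs : 0 < 1 + 4 * κ * c ^ 2 * s) :
    HasDerivAt (fun t => spreadingGaussian κ c t x)
      (κ * (((2 * c ^ 2 * x / (1 + 4 * κ * c ^ 2 * s)) ^ 2 - 2 * c ^ 2 / (1 + 4 * κ * c ^ 2 * s)) *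
        spreadingGaussian κ c s x)) s := by
  have hwidth : HasDerivAt (fun t => 1 + 4 * κ * c ^ 2 * t) (4 * κ * c ^ 2) s := by
    simpa only [mul_one] using ((hasDerivAt_id' s).const_mul (4 * κ * c ^ 2)).const_add 1
  have hamplitude := hwidth.rpow_const (p := -(1:ℝ)/2) (Or.inl hs.ne')
  have hexponent := (hasDerivAt_const s (-(c * x) ^ 2)).fun_div hwidth hs.ne'
  refine (hamplitude.mul hexponent.exp).congr_deriv ?_
  rw [rpow_sub hs, rpow_one]
  unfold spreadingGaussian
  field_simp
  ring

theorem heat_equation (s x : ℝ) (hs : 0 < 1 + 4 * κ * c ^ 2 * s) :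
    deriv (fun t => spreadingGaussian κ c t x) s =
      κ * deriv (deriv fun y => spreadingGaussian κ c s y) x := by
  rw [(hasDerivAt_time κ c s x hs).deriv, (hasDerivAt_deriv_space κ c s x).deriv]

end spreadingGaussian

theorem flux_surface_solution_general (Tb ξ₀ κ : ℝ)
    (hκ : 0 < κ) (T : ℝ → ℝ → ℝ → ℝ)
    (hT : ∀ ξ ζ t : ℝ, T ξ ζ t = Tb + (if |ζ| < 1 then
      (1 + 4 * κ * ξ₀ ^ 2 * t) ^ (-(1:ℝ)/2) *
        Real.exp (-(ξ₀ * ξ) ^ 2 / (1 + 4 * κ * ξ₀ ^ 2 * t)) *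
        ((1 + Real.cos (Real.pi * ζ)) / 2) else 0)) :
    ∀ ξ ζ t : ℝ, 0 ≤ t →
      deriv (fun s => T ξ ζ s) t = κ * deriv (deriv (fun y => T y ζ t)) ξ := by
  intro ξ ζ t ht
  set C := if |ζ| < 1 then (1 + Real.cos (Real.pi * ζ)) / 2 else 0
  have hT_eq : ∀ y s, T y ζ s = Tb + C * spreadingGaussian κ ξ₀ s y := by
    intro y s
    rw [hT]
    simp only [spreadingGaussian, C]
    split_ifs <;> ring
  have hs : 0 < 1 + 4 * κ * ξ₀ ^ 2 * t := by positivity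
  simp only [hT_eq, deriv_const_add', deriv_const_mul_field', deriv_const_mul_field]
  rw [spreadingGaussian.heat_equation κ ξ₀ t ξ hs]
  ring

/-- The flux-surface profile
`T(ξ,ζ,t) = T_b + (1+4κξ₀²t)^{-1/2} exp(-(ξ₀ξ)²/(1+4κξ₀²t)) (1+cos(πζ))/2`
for `|ζ| < 1` (and `T = T_b` for `|ζ| ≥ 1`) satisfies `∂T/∂t = κ ∂²T/∂ξ²`
pointwise for every `(ξ, ζ, t)` with `t ≥ 0`. -/
theorem flux_surface_solution (Tb ξ₀ κ : ℝ) (hTb : 0 < Tb) (hξ₀ : 0 < ξ₀)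
    (hκ : 0 < κ) (T : ℝ → ℝ → ℝ → ℝ)
    (hT : ∀ ξ ζ t : ℝ, T ξ ζ t = Tb + (if |ζ| < 1 then
      (1 + 4 * κ * ξ₀ ^ 2 * t) ^ (-(1:ℝ)/2) *
        Real.exp (-(ξ₀ * ξ) ^ 2 / (1 + 4 * κ * ξ₀ ^ 2 * t)) *
        ((1 + Real.cos (Real.pi * ζ)) / 2) else 0)) :
    ∀ ξ ζ t : ℝ, 0 ≤ t →
      deriv (fun s => T ξ ζ s) t = κ * deriv (deriv (fun y => T y ζ t)) ξ :=
  flux_surface_solution_general Tb ξ₀ κ hκ T hT
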